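/- arXiv:1505.07321 — 2 statements merged into one kernel-verified Lean document; each statement's English description precedes it below -/
import Mathlib

section
/- Let p ∈ (0,1), let h(x) := x log x for x ∈ (0,1] with h(0) := 0, and for each n ∈ ℕ let X_{n,p} be a binomial B(n,p) distributed random variable. Then ‖h(X_{n,p}/n) − E[h(X_{n,p}/n)]‖_3 = O(n^{−1/2}) as n → ∞, where ‖Y‖_3 = (E[|Y|³])^{1/3}. -/
open Filter Asymptotics Real

/-- Expectation of `a` under the binomial distribution `B(n, p)`. -/
noncomputable def binomExp (p : ℝ) (n : ℕ) (a : ℕ → ℝ) : ℝ :=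
  ∑ k ∈ Finset.range (n + 1), (n.choose k : ℝ) * p ^ k * (1 - p) ^ (n - k) * a k

/-!
Write `g x = x log x`. Centering at `g p` instead of at the mean costs only a factor `2³` in the
third absolute moment. On `[0, 1]` one has `|g x - g p| ≤ K |x - p|`: `g` is Lipschitz on
`[p/2, 1]`, and for `x < p/2` the difference is at most `1` while `|x - p| ≥ p/2`. Hence everything
reduces to `E|X - np|³ ≤ n^{3/2}`, which follows by AM-GM from the second and fourth central
moments of `B(n, p)`, computed through the factorial moments `E[X^{(j)}] = n^{(j)} p^j`.
-/

open Finset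

theorem Nat.choose_add_mul_descFactorial (n j i : ℕ) :
    n.choose (j + i) * (j + i).descFactorial j = n.descFactorial j * (n - j).choose i := by
  rw [Nat.descFactorial_eq_factorial_mul_choose, Nat.descFactorial_eq_factorial_mul_choose,
    mul_left_comm, Nat.choose_mul (Nat.le_add_right j i), Nat.add_sub_cancel_left, mul_assoc]

theorem sum_choose_mul_descFactorial {R : Type*} [CommSemiring R] (x y : R) (n j : ℕ) :
    ∑ k ∈ range (n + 1), (n.choose k : R) * x ^ k * y ^ (n - k) * (k.descFactorial j : R)
      = n.descFactorial j * x ^ j * (x + y) ^ (n - j) := by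
  rcases lt_or_ge n j with hnj | hjn
  · rw [Nat.descFactorial_of_lt hnj, Nat.cast_zero, zero_mul, zero_mul]
    refine sum_eq_zero fun k hk => ?_
    rw [Nat.descFactorial_of_lt (by grind), Nat.cast_zero, mul_zero]
  rw [show n + 1 = j + (n - j + 1) by omega, sum_range_add,
    sum_eq_zero fun k hk => by
      rw [Nat.descFactorial_of_lt (mem_range.1 hk), Nat.cast_zero, mul_zero],
    zero_add, add_pow, mul_sum]
  refine sum_congr rfl fun i hi => ?_
  have hcoef := congrArg (Nat.cast : ℕ → R) (Nat.choose_add_mul_descFactorial n j i)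
  push_cast at hcoef
  rw [show n - (j + i) = n - j - i by omega, pow_add]
  calc _ = ((n.choose (j + i) : R) * ((j + i).descFactorial j : R))
          * (x ^ j * x ^ i * y ^ (n - j - i)) := by ring
    _ = _ := by rw [hcoef]; ring

theorem Nat.cast_descFactorial_succ {R : Type*} [CommRing R] (k j : ℕ) :
    (k.descFactorial (j + 1) : R) = (k - j) * k.descFactorial j := by
  rcases le_or_gt j k with h | h
  · rw [Nat.descFactorial_succ, Nat.cast_mul, Nat.cast_sub h]
  · rw [Nat.descFactorial_of_lt h, Nat.descFactorial_of_lt (by omega)]; simp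

section binomExp

variable {p : ℝ} {n : ℕ}

theorem binomExp_descFactorial (j : ℕ) :
    binomExp p n (fun k => k.descFactorial j) = n.descFactorial j * p ^ j := by
  rw [binomExp, sum_choose_mul_descFactorial, add_sub_cancel, one_pow, mul_one]

theorem binomExp_add (a b : ℕ → ℝ) :
    binomExp p n (fun k => a k + b k) = binomExp p n a + binomExp p n b := by
  simp only [binomExp, mul_add, sum_add_distrib]

theorem binomExp_const_mul (c : ℝ) (a : ℕ → ℝ) :
    binomExp p n (fun k => c * a k) = c * binomExp p n a := by
  simp only [binomExp, mul_sum]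
  exact sum_congr rfl fun k _ => by ring

theorem binomExp_const (c : ℝ) : binomExp p n (fun _ => c) = c := by
  have h := binomExp_descFactorial (p := p) (n := n) 0
  simp only [Nat.descFactorial_zero, Nat.cast_one, pow_zero, mul_one] at h
  simpa [h] using binomExp_const_mul (p := p) (n := n) c (fun _ => 1)

theorem binomExp_central_sq :
    binomExp p n (fun k => ((k : ℝ) - n * p) ^ 2) = n * p * (1 - p) := by
  have h (k : ℕ) : ((k : ℝ) - n * p) ^ 2
      = k.descFactorial 2 + ((1 - 2 * (n * p)) * k.descFactorial 1 + (n * p) ^ 2) := by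
    simp only [Nat.cast_descFactorial_succ, Nat.descFactorial_zero]; push_cast; ring
  simp only [h, binomExp_add, binomExp_const_mul, binomExp_const, binomExp_descFactorial]
  simp only [Nat.cast_descFactorial_succ, Nat.descFactorial_zero]
  push_cast; ring

theorem binomExp_central_four :
    binomExp p n (fun k => ((k : ℝ) - n * p) ^ 4)
      = n * p * (1 - p) * (1 + 3 * (n - 2) * p * (1 - p)) := by
  have h (k : ℕ) : ((k : ℝ) - n * p) ^ 4
      = k.descFactorial 4 + ((6 - 4 * (n * p)) * k.descFactorial 3
        + ((7 - 12 * (n * p) + 6 * (n * p) ^ 2) * k.descFactorial 2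
        + ((1 - 4 * (n * p) + 6 * (n * p) ^ 2 - 4 * (n * p) ^ 3) * k.descFactorial 1
        + (n * p) ^ 4))) := by
    simp only [Nat.cast_descFactorial_succ, Nat.descFactorial_zero]; push_cast; ring
  simp only [h, binomExp_add, binomExp_const_mul, binomExp_const, binomExp_descFactorial]
  simp only [Nat.cast_descFactorial_succ, Nat.descFactorial_zero]
  push_cast; ring

theorem binomial_weight_nonneg (hp : p ∈ Set.Icc 0 1) (k : ℕ) :
    0 ≤ (n.choose k : ℝ) * p ^ k * (1 - p) ^ (n - k) := by
  have := hp.1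
  have := sub_nonneg.2 hp.2
  positivity

theorem binomExp_mono (hp : p ∈ Set.Icc 0 1) {a b : ℕ → ℝ} (h : ∀ k ≤ n, a k ≤ b k) :
    binomExp p n a ≤ binomExp p n b :=
  sum_le_sum fun k hk =>
    mul_le_mul_of_nonneg_left (h k (Nat.lt_succ_iff.1 (mem_range.1 hk)))
      (binomial_weight_nonneg hp k)

theorem binomExp_nonneg (hp : p ∈ Set.Icc 0 1) {a : ℕ → ℝ} (ha : ∀ k ≤ n, 0 ≤ a k) :
    0 ≤ binomExp p n a :=
  binomExp_const (p := p) (n := n) 0 ▸ binomExp_mono hp ha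

theorem abs_binomExp_le (hp : p ∈ Set.Icc 0 1) (a : ℕ → ℝ) :
    |binomExp p n a| ≤ binomExp p n (fun k => |a k|) := by
  refine (abs_sum_le_sum_abs _ _).trans_eq (sum_congr rfl fun k _ => ?_)
  rw [abs_mul, abs_of_nonneg (binomial_weight_nonneg hp k)]

theorem pow_binomExp_le (hp : p ∈ Set.Icc 0 1) {a : ℕ → ℝ} (ha : ∀ k, 0 ≤ a k) (m : ℕ) :
    binomExp p n a ^ m ≤ binomExp p n (fun k => a k ^ m) :=
  pow_arith_mean_le_arith_mean_pow _ _ _ (fun k _ => binomial_weight_nonneg hp k)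
    (by simpa [binomExp] using binomExp_const (p := p) (n := n) 1) (fun k _ => ha k) m

theorem binomExp_abs_sub_binomExp_pow_le (hp : p ∈ Set.Icc 0 1) (a : ℕ → ℝ) (c : ℝ) (m : ℕ) :
    binomExp p n (fun k => |a k - binomExp p n a| ^ m)
      ≤ 2 ^ m * binomExp p n (fun k => |a k - c| ^ m) := by
  rcases m with _ | m
  · simp [binomExp_const]
  set D := binomExp p n (fun k => |a k - c| ^ (m + 1))
  have hmean : |binomExp p n a - c| ^ (m + 1) ≤ D := by
    have h : binomExp p n a - c = binomExp p n (fun k => a k + -c) := by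
      rw [binomExp_add, binomExp_const, sub_eq_add_neg]
    rw [h]
    exact (pow_le_pow_left₀ (abs_nonneg _) (abs_binomExp_le hp _) _).trans
      (pow_binomExp_le hp (fun k => abs_nonneg _) _)
  calc binomExp p n (fun k => |a k - binomExp p n a| ^ (m + 1))
      ≤ binomExp p n
          (fun k => 2 ^ m * (|a k - c| ^ (m + 1) + |binomExp p n a - c| ^ (m + 1))) := by
        refine binomExp_mono hp fun k _ => ?_
        have htri : |a k - binomExp p n a| ≤ |a k - c| + |binomExp p n a - c| :=
          abs_sub_comm c (binomExp p n a) ▸ abs_sub_le _ _ _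
        exact (pow_le_pow_left₀ (abs_nonneg _) htri _).trans
          (add_pow_le (abs_nonneg _) (abs_nonneg _) _)
    _ = 2 ^ m * (D + |binomExp p n a - c| ^ (m + 1)) := by
        rw [binomExp_const_mul, binomExp_add, binomExp_const]
    _ ≤ 2 ^ m * (D + D) := by gcongr
    _ = 2 ^ (m + 1) * D := by ring

theorem binomExp_abs_central_cube_le (hp : p ∈ Set.Icc 0 1) :
    binomExp p n (fun k => |(k : ℝ) - n * p| ^ 3) ≤ √(n : ℝ) ^ 3 := by
  rcases Nat.eq_zero_or_pos n with rfl | hn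
  · simp [binomExp]
  set s := √(n : ℝ)
  have hs : 0 < s := Real.sqrt_pos.2 (by exact_mod_cast hn)
  have hsq : s ^ 2 = n := Real.sq_sqrt (Nat.cast_nonneg n)
  have hn1 : (1 : ℝ) ≤ n := by exact_mod_cast hn
  have hvar0 : 0 ≤ p * (1 - p) := mul_nonneg hp.1 (sub_nonneg.2 hp.2)
  have hvar : p * (1 - p) ≤ 1 / 4 := by nlinarith [sq_nonneg (2 * p - 1)]
  have h2 : binomExp p n (fun k => ((k : ℝ) - n * p) ^ 2) ≤ n := by
    rw [binomExp_central_sq]; nlinarith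
  have h4 : binomExp p n (fun k => ((k : ℝ) - n * p) ^ 4) ≤ n ^ 2 := by
    rw [binomExp_central_four]
    nlinarith [mul_le_mul hvar hvar hvar0 (by norm_num), mul_nonneg hvar0 hvar0]
  have amgm (z : ℝ) : |z| ^ 3 ≤ (2 * s)⁻¹ * z ^ 4 + s / 2 * z ^ 2 := by
    have h : (2 * s)⁻¹ * z ^ 4 + s / 2 * z ^ 2 - |z| ^ 3
        = (2 * s)⁻¹ * (|z| ^ 2 * (|z| - s) ^ 2) := by
      rw [show z ^ 4 = (z ^ 2) ^ 2 by ring, ← sq_abs z]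
      field_simp; ring
    nlinarith [show 0 ≤ (2 * s)⁻¹ * (|z| ^ 2 * (|z| - s) ^ 2) by positivity]
  calc binomExp p n (fun k => |(k : ℝ) - n * p| ^ 3)
      ≤ binomExp p n
          (fun k => (2 * s)⁻¹ * ((k : ℝ) - n * p) ^ 4 + s / 2 * ((k : ℝ) - n * p) ^ 2) :=
        binomExp_mono hp fun k _ => amgm _
    _ = (2 * s)⁻¹ * binomExp p n (fun k => ((k : ℝ) - n * p) ^ 4)
        + s / 2 * binomExp p n (fun k => ((k : ℝ) - n * p) ^ 2) := by
        rw [binomExp_add, binomExp_const_mul, binomExp_const_mul]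
    _ ≤ (2 * s)⁻¹ * n ^ 2 + s / 2 * n := by gcongr
    _ = s ^ 3 := by rw [← hsq]; field_simp; ring

theorem binomExp_abs_sub_binomExp_cube_le {f : ℝ → ℝ} {K : ℝ} (hp : p ∈ Set.Icc 0 1)
    (hK : 0 ≤ K) (hf : ∀ x ∈ Set.Icc (0 : ℝ) 1, |f x - f p| ≤ K * |x - p|) (hn : n ≠ 0) :
    binomExp p n (fun k => |f (k / n) - binomExp p n (fun j => f (j / n))| ^ 3)
      ≤ (2 * K / √(n : ℝ)) ^ 3 := by
  have hn0 : (0 : ℝ) < n := by exact_mod_cast Nat.pos_of_ne_zero hn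
  have hs : 0 < √(n : ℝ) := Real.sqrt_pos.2 hn0
  calc binomExp p n (fun k => |f (k / n) - binomExp p n (fun j => f (j / n))| ^ 3)
      ≤ 2 ^ 3 * binomExp p n (fun k => |f (k / n) - f p| ^ 3) :=
        binomExp_abs_sub_binomExp_pow_le hp _ _ 3
    _ ≤ 2 ^ 3 * binomExp p n (fun k => (K / n) ^ 3 * |(k : ℝ) - n * p| ^ 3) := by
        gcongr
        refine binomExp_mono hp fun k hk => ?_
        have hx : (k : ℝ) / n ∈ Set.Icc (0 : ℝ) 1 :=
          ⟨by positivity, div_le_one_of_le₀ (by exact_mod_cast hk) hn0.le⟩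
        have hdist : |(k : ℝ) / n - p| = |(k : ℝ) - n * p| / n := by
          rw [← abs_of_pos hn0, ← abs_div, abs_of_pos hn0]; congr 1; field_simp
        calc |f (k / n) - f p| ^ 3 ≤ (K * |(k : ℝ) / n - p|) ^ 3 :=
              pow_le_pow_left₀ (abs_nonneg _) (hf _ hx) 3
          _ = (K / n) ^ 3 * |(k : ℝ) - n * p| ^ 3 := by rw [hdist]; ring
    _ ≤ 2 ^ 3 * ((K / n) ^ 3 * √(n : ℝ) ^ 3) := by
        rw [binomExp_const_mul]; gcongr; exact binomExp_abs_central_cube_le hp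
    _ = (2 * K / √(n : ℝ)) ^ 3 := by
        have hsq := Real.sq_sqrt hn0.le
        generalize √(n : ℝ) = s at hs hsq ⊢
        rw [← hsq]; field_simp

end binomExp

theorem abs_mul_log_sub_mul_log_le_of_mem_Icc {c x y : ℝ} (hc : 0 < c)
    (hx : x ∈ Set.Icc c 1) (hy : y ∈ Set.Icc c 1) :
    |x * log x - y * log y| ≤ (1 - log c) * |x - y| := by
  have hderiv : ∀ t ∈ Set.Icc c 1, ‖log t + 1‖ ≤ 1 - log c := by
    intro t ht
    have hlog_le : log t ≤ 0 := log_nonpos (hc.trans_le ht.1).le ht.2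
    have hlog_ge : log c ≤ log t := log_le_log hc ht.1
    rw [Real.norm_eq_abs, abs_le]
    constructor <;> linarith
  simpa [Real.norm_eq_abs] using (convex_Icc c 1).norm_image_sub_le_of_norm_hasDerivWithin_le
    (fun t ht => (hasDerivAt_mul_log (hc.trans_le ht.1).ne').hasDerivWithinAt) hderiv hy hx

theorem abs_mul_log_sub_mul_log_le {p x : ℝ} (hp : p ∈ Set.Ioc 0 1) (hx : x ∈ Set.Icc 0 1) :
    |x * log x - p * log p| ≤ (1 - log (p / 2) + 2 / p) * |x - p| := by
  obtain ⟨hp0, hp1⟩ := hp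
  have hlog : log (p / 2) ≤ 0 := log_nonpos (by positivity) (by linarith)
  rcases le_or_gt (p / 2) x with hpx | hxp
  · calc |x * log x - p * log p| ≤ (1 - log (p / 2)) * |x - p| :=
          abs_mul_log_sub_mul_log_le_of_mem_Icc (by positivity) ⟨hpx, hx.2⟩ ⟨by linarith, hp1⟩
      _ ≤ (1 - log (p / 2) + 2 / p) * |x - p| := by gcongr; linarith [div_pos two_pos hp0]
  · have hdiff : |x * log x - p * log p| ≤ 1 := by
      have := self_sub_one_le_mul_log hx.1
      have := self_sub_one_le_mul_log hp0.le
      have := mul_log_nonpos hx.1 hx.2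
      have := mul_log_nonpos hp0.le hp1
      rw [abs_le]; constructor <;> linarith [hx.1, hx.2]
    have hdist : p / 2 ≤ |x - p| := by rw [abs_sub_comm, abs_of_pos (by linarith)]; linarith
    calc |x * log x - p * log p| ≤ 1 := hdiff
      _ = 2 / p * (p / 2) := by field_simp
      _ ≤ 2 / p * |x - p| := by gcongr
      _ ≤ (1 - log (p / 2) + 2 / p) * |x - p| := by gcongr; linarith

theorem stmt16 (p : ℝ) (hp : p ∈ Set.Ioo (0 : ℝ) 1) (h : ℝ → ℝ)
    (hh : ∀ x : ℝ, h x = x * Real.log x) :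
    (fun n : ℕ =>
        (binomExp p n
            (fun k => |h ((k : ℝ) / n) - binomExp p n (fun j => h ((j : ℝ) / n))| ^ 3))
          ^ ((1 : ℝ) / 3))
      =O[atTop] (fun n : ℕ => (n : ℝ) ^ (-(1 : ℝ) / 2)) := by
  obtain ⟨hp0, hp1⟩ := hp
  set K := 1 - log (p / 2) + 2 / p
  have hK : 0 ≤ K := by
    have : log (p / 2) ≤ 0 := log_nonpos (by positivity) (by linarith)
    have : 0 < 2 / p := by positivity
    linarith
  have hLip (x : ℝ) (hx : x ∈ Set.Icc (0 : ℝ) 1) : |h x - h p| ≤ K * |x - p| := by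
    rw [hh, hh]; exact abs_mul_log_sub_mul_log_le ⟨hp0, hp1.le⟩ hx
  refine isBigO_iff.2 ⟨2 * K, ?_⟩
  filter_upwards [eventually_ne_atTop 0] with n hn
  have hsqrt : (n : ℝ) ^ (-(1 : ℝ) / 2) = (√(n : ℝ))⁻¹ := by
    rw [neg_div, rpow_neg (Nat.cast_nonneg n), sqrt_eq_rpow]
  have hbound := binomExp_abs_sub_binomExp_cube_le ⟨hp0.le, hp1.le⟩ hK hLip hn
  have hE := binomExp_nonneg (n := n) ⟨hp0.le, hp1.le⟩ fun k _ =>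
    pow_nonneg (abs_nonneg (h (k / n) - binomExp p n (fun j => h (j / n)))) 3
  rw [norm_of_nonneg (rpow_nonneg hE _), hsqrt, norm_inv, norm_of_nonneg (sqrt_nonneg _)]
  calc _ ≤ ((2 * K / √(n : ℝ)) ^ 3) ^ ((1 : ℝ) / 3) := rpow_le_rpow hE hbound (by norm_num)
    _ = 2 * K * (√(n : ℝ))⁻¹ := by
      rw [show (1 : ℝ) / 3 = ((3 : ℕ) : ℝ)⁻¹ by norm_num,
        pow_rpow_inv_natCast (by positivity) three_ne_zero, div_eq_mul_inv]
end

section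
/- Let p ∈ (0,1), let h(x) := x log x for x ∈ (0,1] with h(0) := 0, and for each n ∈ ℕ let X_{n,p} be a binomial B(n,p) distributed random variable. Then E[h(X_{n,p}/n) − h(p)] = O(n^{−2/3}) as n → ∞. -/
open Filter Asymptotics Real Finset

lemma binom0 (x y : ℝ) (n : ℕ) :
    ∑ k ∈ Finset.range (n+1), (n.choose k : ℝ) * x^k * y^(n-k) = (x+y)^n := by
  rw [add_pow]
  exact Finset.sum_congr rfl (fun k _ => by ring)

lemma binom1 (x y : ℝ) (n : ℕ) :
    ∑ k ∈ Finset.range (n+1), (n.choose k : ℝ) * x^k * y^(n-k) * k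
      = n * x * (x+y)^(n-1) := by
  cases n with
  | zero => simp
  | succ m =>
    rw [Finset.sum_range_succ']
    have step : ∀ j ∈ Finset.range (m+1),
        ((m+1).choose (j+1) : ℝ) * x^(j+1) * y^(m+1-(j+1)) * ((j+1 : ℕ) : ℝ)
          = ((m:ℝ)+1) * x * ((m.choose j : ℝ) * x^j * y^(m-j)) := by
      intro j hj
      have hc : ((m+1) * m.choose j : ℕ) = ((m+1).choose (j+1) * (j+1) : ℕ) :=
        Nat.add_one_mul_choose_eq m j
      have hc' : ((m:ℝ)+1) * (m.choose j : ℝ) = ((m+1).choose (j+1) : ℝ) * ((j:ℝ)+1) := by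
        exact_mod_cast congrArg (Nat.cast : ℕ → ℝ) hc
      have he : m+1-(j+1) = m - j := by omega
      rw [he]
      push_cast
      linear_combination (-(x^(j+1) * y^(m-j))) * hc'
    rw [Finset.sum_congr rfl step, ← Finset.mul_sum, binom0]
    push_cast
    simp

lemma binom2 (x y : ℝ) (n : ℕ) :
    ∑ k ∈ Finset.range (n+1), (n.choose k : ℝ) * x^k * y^(n-k) * ((k:ℝ) * ((k:ℝ)-1))
      = n * ((n:ℝ)-1) * x^2 * (x+y)^(n-2) := by
  cases n with
  | zero => simp
  | succ m =>
    rw [Finset.sum_range_succ']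
    have step : ∀ j ∈ Finset.range (m+1),
        ((m+1).choose (j+1) : ℝ) * x^(j+1) * y^(m+1-(j+1))
            * (((j+1 : ℕ):ℝ) * (((j+1 : ℕ):ℝ)-1))
          = ((m:ℝ)+1) * x * ((m.choose j : ℝ) * x^j * y^(m-j) * (j:ℝ)) := by
      intro j hj
      have hc : ((m+1) * m.choose j : ℕ) = ((m+1).choose (j+1) * (j+1) : ℕ) :=
        Nat.add_one_mul_choose_eq m j
      have hc' : ((m:ℝ)+1) * (m.choose j : ℝ) = ((m+1).choose (j+1) : ℝ) * ((j:ℝ)+1) := by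
        exact_mod_cast congrArg (Nat.cast : ℕ → ℝ) hc
      have he : m+1-(j+1) = m - j := by omega
      rw [he]
      push_cast
      linear_combination (-(x^(j+1) * y^(m-j) * (j:ℝ))) * hc'
    rw [Finset.sum_congr rfl step, ← Finset.mul_sum, binom1]
    push_cast
    ring

/-- Pointwise Bregman-divergence bound for `x ↦ x log x`. -/
lemma key_bound (p : ℝ) (hp0 : 0 < p) (x : ℝ) (hx : 0 ≤ x) :
    0 ≤ x * Real.log x - p * Real.log p - (Real.log p + 1) * (x - p) ∧
      x * Real.log x - p * Real.log p - (Real.log p + 1) * (x - p) ≤ (x - p)^2 / p := by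
  rcases eq_or_lt_of_le hx with hx0 | hx0
  · rw [← hx0]
    have hd : ((0:ℝ)-p)^2/p = p := by rw [div_eq_iff (ne_of_gt hp0)]; ring
    rw [hd]
    constructor <;> · simp [Real.log_zero]; nlinarith [Real.log_zero]
  · have hxp : 0 < x / p := div_pos hx0 hp0
    have hpx : 0 < p / x := div_pos hp0 hx0
    have h1 : Real.log x - Real.log p ≤ x / p - 1 := by
      have := Real.log_le_sub_one_of_pos hxp
      rwa [Real.log_div (ne_of_gt hx0) (ne_of_gt hp0)] at this
    have h2 : Real.log p - Real.log x ≤ p / x - 1 := by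
      have := Real.log_le_sub_one_of_pos hpx
      rwa [Real.log_div (ne_of_gt hp0) (ne_of_gt hx0)] at this
    constructor
    · have h4 : x * (Real.log p - Real.log x) ≤ x * (p/x - 1) :=
        mul_le_mul_of_nonneg_left h2 hx
      have h5 : x * (p/x) = p := by field_simp
      nlinarith [h4, h5]
    · have h6 : x * (Real.log x - Real.log p) ≤ x * (x/p - 1) :=
        mul_le_mul_of_nonneg_left h1 hx
      have h8 : (x-p)^2/p = x*(x/p) - 2*x + p := by field_simp; ring
      rw [h8]
      nlinarith [h6]

theorem stmt17 (p : ℝ) (hp : p ∈ Set.Ioo (0 : ℝ) 1) (h : ℝ → ℝ)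
    (hh : ∀ x : ℝ, h x = x * Real.log x) :
    (fun n : ℕ => binomExp p n (fun k => h ((k : ℝ) / n)) - h p)
      =O[atTop] (fun n : ℕ => (n : ℝ) ^ (-(2 : ℝ) / 3)) := by
  obtain ⟨hp0, hp1⟩ := hp
  rw [isBigO_iff]
  refine ⟨1, ?_⟩
  filter_upwards [eventually_ge_atTop 1] with n hn
  have hn0 : (0:ℝ) < n := by exact_mod_cast hn
  set c := Real.log p + 1 with hc
  set w : ℕ → ℝ := fun k => (n.choose k : ℝ) * p^k * (1-p)^(n-k) with hw
  have hpq : p + (1-p) = 1 := by ring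
  have hwnn : ∀ k, 0 ≤ w k := by
    intro k
    have : (0:ℝ) ≤ 1 - p := by linarith
    positivity
  have S0 : ∑ k ∈ Finset.range (n+1), w k = 1 := by
    have := binom0 p (1-p) n
    rw [hpq, one_pow] at this
    exact this
  have S1 : ∑ k ∈ Finset.range (n+1), w k * k = n * p := by
    have := binom1 p (1-p) n
    rw [hpq, one_pow, mul_one] at this
    exact this
  have S2 : ∑ k ∈ Finset.range (n+1), w k * ((k:ℝ)*((k:ℝ)-1)) = n*((n:ℝ)-1)*p^2 := by
    have := binom2 p (1-p) n
    rw [hpq, one_pow, mul_one] at this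
    exact this
  have Svar : ∑ k ∈ Finset.range (n+1), w k * ((k:ℝ) - n*p)^2 = n*p*(1-p) := by
    have expand : ∀ k ∈ Finset.range (n+1), w k * ((k:ℝ)-n*p)^2
        = w k * ((k:ℝ)*((k:ℝ)-1)) + (1-2*(n:ℝ)*p) * (w k * k) + ((n:ℝ)*p)^2 * (w k) := by
      intro k _; ring
    rw [Finset.sum_congr rfl expand, Finset.sum_add_distrib, Finset.sum_add_distrib,
      ← Finset.mul_sum, ← Finset.mul_sum, S0, S1, S2]
    ring
  set G : ℕ → ℝ := fun k =>
    ((k:ℝ)/n) * Real.log ((k:ℝ)/n) - p * Real.log p - c * ((k:ℝ)/n - p) with hG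
  have main : binomExp p n (fun k => h ((k:ℝ)/n)) - h p
      = ∑ k ∈ Finset.range (n+1), w k * G k := by
    have expand2 : ∀ k ∈ Finset.range (n+1),
        w k * G k
        = w k * (h ((k:ℝ)/n)) - (p*Real.log p) * w k - (c/(n:ℝ)) * (w k * k) + (c*p) * w k := by
      intro k _
      rw [hG, hh]
      field_simp
      ring
    rw [Finset.sum_congr rfl expand2]
    rw [Finset.sum_add_distrib, Finset.sum_sub_distrib, Finset.sum_sub_distrib,
      ← Finset.mul_sum, ← Finset.mul_sum, ← Finset.mul_sum, S0, S1]
    rw [binomExp, hh p]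
    have : (c/(n:ℝ)) * ((n:ℝ)*p) = c * p := by field_simp
    rw [this]
    simp [hw]
  have lower : 0 ≤ ∑ k ∈ Finset.range (n+1), w k * G k :=
    Finset.sum_nonneg fun k hk =>
      mul_nonneg (hwnn k) (key_bound p hp0 ((k:ℝ)/n) (by positivity)).1
  have upper : ∑ k ∈ Finset.range (n+1), w k * G k
      ≤ ∑ k ∈ Finset.range (n+1), w k * (((k:ℝ)/n - p)^2 / p) :=
    Finset.sum_le_sum fun k hk =>
      mul_le_mul_of_nonneg_left (key_bound p hp0 ((k:ℝ)/n) (by positivity)).2 (hwnn k)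
  have upeval : ∑ k ∈ Finset.range (n+1), w k * (((k:ℝ)/n - p)^2 / p) = (1-p)/n := by
    have step : ∀ k ∈ Finset.range (n+1),
        w k * (((k:ℝ)/n - p)^2 / p) = (1/(p*(n:ℝ)^2)) * (w k * ((k:ℝ) - n*p)^2) := by
      intro k _
      have e1 : ((k:ℝ)/n - p) = ((k:ℝ) - n*p)/n := by field_simp
      rw [e1, div_pow, div_div]
      ring
    rw [Finset.sum_congr rfl step, ← Finset.mul_sum, Svar]
    field_simp
  have hbound : |binomExp p n (fun k => h ((k:ℝ)/n)) - h p| ≤ 1/(n:ℝ) := by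
    rw [main, abs_of_nonneg lower]
    have : ∑ k ∈ Finset.range (n+1), w k * G k ≤ (1-p)/n := upeval ▸ upper
    have h1 : (1-p)/(n:ℝ) ≤ 1/(n:ℝ) := by
      rw [div_le_div_iff₀ hn0 hn0]; nlinarith
    linarith
  have hr : 1/(n:ℝ) ≤ (n:ℝ) ^ (-(2:ℝ)/3) := by
    have h1n : (n:ℝ)^(-(1:ℝ)) ≤ (n:ℝ)^(-(2:ℝ)/3) :=
      Real.rpow_le_rpow_of_exponent_le (by exact_mod_cast hn) (by norm_num)
    rwa [Real.rpow_neg_one, inv_eq_one_div] at h1n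
  have hrn : (0:ℝ) ≤ (n:ℝ)^(-(2:ℝ)/3) := Real.rpow_nonneg hn0.le _
  simp only [Real.norm_eq_abs, one_mul]
  rw [abs_of_nonneg hrn]
  exact le_trans hbound hr
end
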